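/- arXiv:1504.01321 — 4 statements merged into one kernel-verified Lean document; each statement's English description precedes it below -/
import Mathlib

section
/- Let p ≥ 7 be an odd integer and F(u) = m·u² + n·u + m with m, n ∈ ℤ. Set a = b = (p−1)/2. Then there is no pair (m, n) of integers such that in ℤ[u,u⁻¹]/(u^{p-1} + ⋯ + u + 1) one has F(u)·(u^{(p−1)/2} − 1)² = ± u^l·(u − 1)(u^c − 1) for some integer l and some odd c with 3 ≤ c ≤ p − 4. -/
/-- The ring `ℤ[u, u⁻¹]/(u^{p-1} + ⋯ + u + 1)`; since `u^p = 1` here, `u` is a unit. -/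
noncomputable abbrev cyclicQuot (p : ℕ) :=
  Polynomial ℤ ⧸ Ideal.span {∑ i ∈ Finset.range p, (Polynomial.X : Polynomial ℤ) ^ i}

/-- The class of `u`. -/
noncomputable abbrev uu (p : ℕ) : cyclicQuot p := Ideal.Quotient.mk _ Polynomial.X

open Polynomial

noncomputable def Fpoly (p : ℕ) : Polynomial (ZMod 2) := ∑ i ∈ Finset.range p, X ^ i

noncomputable abbrev Squot (p : ℕ) := Polynomial (ZMod 2) ⧸ Ideal.span {Fpoly p}

noncomputable def ww (p : ℕ) : Squot p := Ideal.Quotient.mk _ X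

lemma Fpoly_coeff (p i : ℕ) : (Fpoly p).coeff i = if i < p then 1 else 0 := by
  simp [Fpoly, finset_sum_coeff, coeff_X_pow]

lemma Fpoly_ne_zero (p : ℕ) (hp : 0 < p) : Fpoly p ≠ 0 := by
  intro h
  have := congrArg (fun q => Polynomial.coeff q 0) h
  simp [Fpoly_coeff, hp] at this

lemma Fpoly_natDegree (p : ℕ) (hp : 0 < p) : (Fpoly p).natDegree = p - 1 := by
  apply le_antisymm
  · apply Polynomial.natDegree_sum_le_of_forall_le
    intro i hi
    simp only [natDegree_X_pow]
    exact Nat.le_sub_one_of_lt (Finset.mem_range.mp hi)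
  · apply Polynomial.le_natDegree_of_ne_zero
    rw [Fpoly_coeff]
    simp [Nat.sub_lt hp]

lemma mk_Fpoly (p : ℕ) : Ideal.Quotient.mk (Ideal.span {Fpoly p}) (Fpoly p) = 0 := by
  rw [Ideal.Quotient.eq_zero_iff_mem]
  exact Ideal.mem_span_singleton_self _

lemma two_eq_zero_S (p : ℕ) : (2 : Squot p) = 0 := by
  have h1 : (2 : Polynomial (ZMod 2)) = C 2 := (map_ofNat C 2).symm
  have h2 : (2 : ZMod 2) = 0 := by decide
  have : (2 : Squot p) = Ideal.Quotient.mk _ (2 : Polynomial (ZMod 2)) :=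
    (map_ofNat (Ideal.Quotient.mk _) 2).symm
  rw [this, h1, h2]
  simp

lemma neg_eq_S (p : ℕ) (x : Squot p) : -x = x := by
  rw [neg_eq_iff_add_eq_zero, ← two_mul, two_eq_zero_S, zero_mul]

lemma ww_pow_p (p : ℕ) (hp : 0 < p) : ww p ^ p = 1 := by
  have h : (X : Polynomial (ZMod 2)) ^ p - 1 = Fpoly p * (X - 1) := by
    rw [Fpoly, geom_sum_mul]
  have : ww p ^ p - 1 = Ideal.Quotient.mk (Ideal.span {Fpoly p}) (X ^ p - 1) := by
    simp [ww]
  rw [h] at this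
  rw [map_mul, mk_Fpoly, zero_mul] at this
  exact sub_eq_zero.mp this


noncomputable def phi (p : ℕ) : cyclicQuot p →+* Squot p :=
  Ideal.Quotient.lift _ ((Ideal.Quotient.mk (Ideal.span {Fpoly p})).comp
    (mapRingHom (Int.castRingHom (ZMod 2)))) (by
      intro a ha
      rw [Ideal.mem_span_singleton] at ha
      obtain ⟨r, rfl⟩ := ha
      simp only [map_mul, RingHom.comp_apply]
      have h : (mapRingHom (Int.castRingHom (ZMod 2)))
          (∑ i ∈ Finset.range p, (X : Polynomial ℤ) ^ i) = Fpoly p := by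
        simp [Fpoly]
      rw [h, mk_Fpoly, zero_mul])

lemma phi_uu (p : ℕ) : phi p (uu p) = ww p := by
  simp [phi, uu, ww, Ideal.Quotient.lift_mk]


lemma ww_pow_mod (p : ℕ) (hp : 0 < p) (k : ℕ) : ww p ^ k = ww p ^ (k % p) := by
  conv_lhs => rw [← Nat.div_add_mod k p]
  rw [pow_add, pow_mul, ww_pow_p p hp, one_pow, one_mul]

set_option maxHeartbeats 1000000 in
/-- Case (ii)(a) in the proof of Lemma 4.2(1) of Kadokami: for odd `p ≥ 7` and odd
`c` with `3 ≤ c ≤ p − 4`, the equation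
`(mu² + nu + m)(u^{(p−1)/2} − 1)² = ±u^l(u − 1)(u^c − 1)` in
`ℤ[u,u⁻¹]/(u^{p-1}+⋯+1)` has no integer solution `(m, n)`. -/
theorem no_solution_middle_c (p : ℕ) (hp : 7 ≤ p) (hodd : Odd p) (m n : ℤ) (c l : ℕ)
    (hcodd : Odd c) (hc1 : 3 ≤ c) (hc2 : c ≤ p - 4)
    (ε : ℤ) (hε : ε = 1 ∨ ε = -1)
    (heq : ((m : cyclicQuot p) * uu p ^ 2 + (n : cyclicQuot p) * uu p + (m : cyclicQuot p)) *
        (uu p ^ ((p - 1) / 2) - 1) ^ 2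
      = (ε : cyclicQuot p) * uu p ^ l * (uu p - 1) * (uu p ^ c - 1)) :
    False := by
  have hp0 : 0 < p := by omega
  have h2h : 2 * ((p - 1) / 2) = p - 1 := by obtain ⟨k, hk⟩ := hodd; omega
  set h := (p - 1) / 2 with hhdef
  -- push the equation to Squot p
  have E1 := congrArg (phi p) heq
  simp only [map_mul, map_add, map_pow, map_sub, map_one, map_intCast, phi_uu] at E1
  set w := ww p with hwdef
  -- ε maps to 1
  have hε1 : ((ε : ℤ) : Squot p) = 1 := by
    rcases hε with h | h <;> subst h
    · norm_num
    · push_cast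
      exact neg_eq_S p 1
  rw [hε1, one_mul] at E1
  -- multiply by w
  have key : (w ^ h - 1) ^ 2 * w = 1 + w := by
    have e : (w ^ h - 1) ^ 2 * w = w ^ (2 * h + 1) - 2 * w ^ (h + 1) + w := by ring
    rw [e, show 2 * h + 1 = p by omega, ww_pow_p p hp0, two_eq_zero_S, zero_mul]
    ring
  have hsub : w - 1 = w + 1 := by
    rw [sub_eq_add_neg, neg_eq_S]
  set a := (l + 1 + c) % p with hadef
  set b := (l + 1) % p with hbdef
  have E2 : ((m : Squot p) * w ^ 2 + (n : Squot p) * w + (m : Squot p)) * (1 + w)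
      = (w + 1) * (w ^ a + w ^ b) := by
    have := congrArg (· * w) E1
    rw [mul_assoc _ _ w, key] at this
    rw [this, hsub]
    rw [show w ^ l * (w + 1) * (w ^ c - 1) * w = (w + 1) * (w ^ (l + 1 + c) + w ^ (l + 1))
        - (w + 1) * (2 * w ^ (l + 1)) from by ring]
    rw [two_eq_zero_S]
    rw [ww_pow_mod p hp0 (l + 1 + c), ww_pow_mod p hp0 (l + 1), ← hadef, ← hbdef]
    ring
  have E3 : (w + 1) * ((m : Squot p) * w ^ 2 + (n : Squot p) * w + (m : Squot p)
      + w ^ a + w ^ b) = 0 := by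
    have e : (w + 1) * ((m : Squot p) * w ^ 2 + (n : Squot p) * w + (m : Squot p)
        + w ^ a + w ^ b)
        = ((m : Squot p) * w ^ 2 + (n : Squot p) * w + (m : Squot p)) * (1 + w)
        + (w + 1) * (w ^ a + w ^ b) := by ring
    rw [e, E2, ← two_mul, two_eq_zero_S, zero_mul]
  -- pull back to polynomial divisibility
  set G : Polynomial (ZMod 2) := C ((m : ZMod 2)) * X ^ 2 + C ((n : ZMod 2)) * X ^ 1
      + C ((m : ZMod 2)) * X ^ 0 + X ^ a + X ^ b with hGdef
  have hX : Ideal.Quotient.mk (Ideal.span {Fpoly p}) (X : Polynomial (ZMod 2)) = w := rfl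
  have E4 : Ideal.Quotient.mk (Ideal.span {Fpoly p}) ((X + 1) * G) = 0 := by
    rw [hGdef]
    simp only [map_mul, map_add, map_pow, map_one, C_eq_intCast, map_intCast, hX,
      pow_zero, mul_one]
    linear_combination E3
  have hdvd : Fpoly p ∣ (X + 1) * G := by
    rw [← Ideal.mem_span_singleton]
    exact Ideal.Quotient.eq_zero_iff_mem.mp E4
  -- coprimality, cancel X + 1
  have hcop : IsCoprime (Fpoly p) (X + 1 : Polynomial (ZMod 2)) := by
    obtain ⟨q, hq⟩ : (X - C 1) ∣ (Fpoly p - C ((Fpoly p).eval 1)) :=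
      X_sub_C_dvd_sub_C_eval
    have heval : (Fpoly p).eval 1 = 1 := by
      have : (Fpoly p).eval 1 = (p : ZMod 2) := by
        simp [Fpoly, eval_finset_sum]
      rw [this, show (p : ZMod 2) = ((p % 2 : ℕ) : ZMod 2) from (ZMod.natCast_mod p 2).symm,
        Nat.odd_iff.mp hodd]
      norm_num
    have hXC : (X - C 1 : Polynomial (ZMod 2)) = X + 1 := by
      have h11 : (1 + 1 : Polynomial (ZMod 2)) = 0 := by
        rw [← C_1, ← C_add, show (1 + 1 : ZMod 2) = 0 by decide, C_0]
      rw [C_1]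
      linear_combination -h11
    rw [heval, hXC] at hq
    exact ⟨1, -q, by rw [C_1] at hq; linear_combination hq⟩
  have hFG : Fpoly p ∣ G := hcop.dvd_of_dvd_mul_left hdvd
  -- arithmetic facts about a and b
  have hb_lt : b < p := Nat.mod_lt _ hp0
  have ha_lt : a < p := Nat.mod_lt _ hp0
  have hab' : a = (b + c) % p := by
    rw [hadef, hbdef, Nat.add_mod (l + 1) c p, Nat.mod_eq_of_lt (show c < p by omega)]
  have hab : a ≠ b := by
    intro hE
    rw [hab'] at hE
    have hd := Nat.div_add_mod (b + c) p
    rw [hE] at hd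
    rcases Nat.eq_zero_or_pos ((b + c) / p) with h0 | h0
    · rw [h0, Nat.mul_zero] at hd; omega
    · have := Nat.le_mul_of_pos_right p h0
      omega
  have hGcoeff : ∀ i, G.coeff i
      = (if i = 2 then ((m : ZMod 2)) else 0) + (if i = 1 then ((n : ZMod 2)) else 0)
        + (if i = 0 then ((m : ZMod 2)) else 0)
        + (if i = a then 1 else 0) + (if i = b then 1 else 0) := by
    intro i
    simp only [hGdef, coeff_add, coeff_C_mul, coeff_X_pow, mul_ite, mul_one, mul_zero]
  rcases eq_or_ne G 0 with hG0 | hGne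
  · -- G = 0 : forces a ≤ 2 and b ≤ 2, contradicting a = b + c ≥ 3
    have hale : a ≤ 2 := by
      by_contra hgt
      push_neg at hgt
      have hh := hGcoeff a
      rw [hG0, coeff_zero] at hh
      rw [if_neg (show a ≠ 2 by omega), if_neg (show a ≠ 1 by omega),
        if_neg (show a ≠ 0 by omega), if_pos rfl, if_neg hab] at hh
      simp at hh
    have hble : b ≤ 2 := by
      by_contra hgt
      push_neg at hgt
      have hh := hGcoeff b
      rw [hG0, coeff_zero] at hh
      rw [if_neg (show b ≠ 2 by omega), if_neg (show b ≠ 1 by omega),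
        if_neg (show b ≠ 0 by omega), if_neg hab.symm, if_pos rfl] at hh
      simp at hh
    have haeq : a = b + c := by
      rw [hab', Nat.mod_eq_of_lt (by omega)]
    omega
  · -- G ≠ 0 : then G = Fpoly p, compare a coefficient in {3,4,5}
    obtain ⟨q, hq⟩ := hFG
    have hq0 : q ≠ 0 := by rintro rfl; rw [mul_zero] at hq; exact hGne hq
    have hdeg : G.natDegree ≤ p - 1 := by
      rw [hGdef]
      compute_degree
      all_goals omega
    have hdegq : q.natDegree = 0 := by
      have hm := Polynomial.natDegree_mul (Fpoly_ne_zero p hp0) hq0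
      rw [← hq, Fpoly_natDegree p hp0] at hm
      omega
    obtain ⟨u, rfl⟩ := Polynomial.natDegree_eq_zero.mp hdegq
    have hu : u = 1 := by
      have hu0 : u ≠ 0 := by rintro rfl; simp at hq0
      revert hu0
      have : ∀ x : ZMod 2, x ≠ 0 → x = 1 := by decide
      exact this u
    subst hu
    rw [C_1, mul_one] at hq
    obtain ⟨i, hi3, hi5, hia, hib⟩ : ∃ i, 3 ≤ i ∧ i ≤ 5 ∧ i ≠ a ∧ i ≠ b := by
      by_cases h3 : a ≠ 3 ∧ b ≠ 3
      · exact ⟨3, le_rfl, by omega, Ne.symm h3.1, Ne.symm h3.2⟩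
      · push_neg at h3
        by_cases h4 : a ≠ 4 ∧ b ≠ 4
        · exact ⟨4, by omega, by omega, Ne.symm h4.1, Ne.symm h4.2⟩
        · push_neg at h4
          refine ⟨5, by omega, le_rfl, ?_, ?_⟩ <;> omega
    have hcf := hGcoeff i
    rw [hq, Fpoly_coeff, if_pos (show i < p by omega)] at hcf
    rw [if_neg (show i ≠ 2 by omega), if_neg (show i ≠ 1 by omega),
      if_neg (show i ≠ 0 by omega), if_neg hia, if_neg hib] at hcf
    simp at hcf
end

section
/- In ℤ[u, u⁻¹] modulo u^{p-1} + ⋯ + u + 1 (p odd, p ≥ 5), for integers m, n the identity (m·u² + n·u + m)·(u^{(p−1)/2} − 1)² = u^{(p+1)/2}·[ (−m − 3n) + (−3m − n)(u + u⁻¹) − (m + n)(u² + u⁻²) − ⋯ − (m + n)(u^{(p−5)/2} + u^{−(p−5)/2}) − n(u^{(p−3)/2} + u^{−(p−3)/2}) ] holds. -/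
/-- Equation (4.8) in Kadokami's proof of Lemma 4.2: the deformation of
`(mu² + nu + m)(u^{(p−1)/2} − 1)²` modulo `u^{p−1} + ⋯ + u + 1` for odd `p ≥ 5`.
Negative powers `u^{-j}` are written `u^{p-j}`; the extreme coefficient `−n` is
realized as `−(m+n) + m`, so the formula is uniformly valid (including `p = 5`,
where adjacent terms overlap and coefficients add). -/
theorem deformation_identity (p : ℕ) (hp : 5 ≤ p) (hodd : Odd p) (m n : ℤ) :
    ((m : cyclicQuot p) * uu p ^ 2 + (n : cyclicQuot p) * uu p + (m : cyclicQuot p)) *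
        (uu p ^ ((p - 1) / 2) - 1) ^ 2 =
      uu p ^ ((p + 1) / 2) *
        ((-(m : cyclicQuot p) - 3 * (n : cyclicQuot p)) +
          (-3 * (m : cyclicQuot p) - (n : cyclicQuot p)) * (uu p + uu p ^ (p - 1)) +
          (∑ j ∈ Finset.Icc 2 ((p - 3) / 2),
            (-(m : cyclicQuot p) - (n : cyclicQuot p)) * (uu p ^ j + uu p ^ (p - j))) +
          (m : cyclicQuot p) * (uu p ^ ((p - 3) / 2) + uu p ^ (p - (p - 3) / 2))) := by
  obtain ⟨k, hk⟩ := hodd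
  obtain ⟨j0, rfl⟩ : ∃ j0, p = 2 * j0 + 5 := ⟨k - 2, by omega⟩
  have hsum : ∑ i ∈ Finset.range (2 * j0 + 5), uu (2 * j0 + 5) ^ i = 0 := by
    have h : (∑ i ∈ Finset.range (2 * j0 + 5), (Polynomial.X : Polynomial ℤ) ^ i) ∈
        Ideal.span {∑ i ∈ Finset.range (2 * j0 + 5), (Polynomial.X : Polynomial ℤ) ^ i} :=
      Ideal.subset_span rfl
    simpa [map_sum, map_pow] using Ideal.Quotient.eq_zero_iff_mem.mpr h
  have hup : uu (2 * j0 + 5) ^ (2 * j0 + 5) = 1 := by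
    have h2 := geom_sum_mul (uu (2 * j0 + 5)) (2 * j0 + 5)
    rw [hsum, zero_mul] at h2
    exact eq_of_sub_eq_zero h2.symm
  have e1 : (2 * j0 + 5 - 1) / 2 = j0 + 2 := by omega
  have e2 : (2 * j0 + 5 + 1) / 2 = j0 + 3 := by omega
  have e3 : (2 * j0 + 5 - 3) / 2 = j0 + 1 := by omega
  have e5 : 2 * j0 + 5 - 1 = 2 * j0 + 4 := by omega
  rw [e1, e2, e3, e5]
  have e4 : 2 * j0 + 5 - (j0 + 1) = j0 + 4 := by omega
  rw [e4]
  have hS : (∑ j ∈ Finset.Icc 2 (j0 + 1),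
      (-(m : cyclicQuot (2 * j0 + 5)) - (n : cyclicQuot (2 * j0 + 5))) *
        (uu (2 * j0 + 5) ^ j + uu (2 * j0 + 5) ^ (2 * j0 + 5 - j))) =
      (-(m : cyclicQuot (2 * j0 + 5)) - (n : cyclicQuot (2 * j0 + 5))) *
        (-(1 + uu (2 * j0 + 5) + uu (2 * j0 + 5) ^ (2 * j0 + 4) +
          uu (2 * j0 + 5) ^ (j0 + 2) + uu (2 * j0 + 5) ^ (j0 + 3))) := by
    rw [← Finset.mul_sum]
    congr 1
    have hsplit : ∑ j ∈ Finset.Icc 2 (j0 + 1),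
        (uu (2 * j0 + 5) ^ j + uu (2 * j0 + 5) ^ (2 * j0 + 5 - j)) =
        (∑ j ∈ Finset.Icc 2 (j0 + 1), uu (2 * j0 + 5) ^ j) +
        (∑ j ∈ Finset.Icc (j0 + 4) (2 * j0 + 3), uu (2 * j0 + 5) ^ j) := by
      rw [Finset.sum_add_distrib]
      congr 1
      refine Finset.sum_nbij' (fun a => 2 * j0 + 5 - a) (fun a => 2 * j0 + 5 - a) ?_ ?_ ?_ ?_ ?_
      · intro a ha; simp only [Finset.mem_Icc] at *; omega
      · intro a ha; simp only [Finset.mem_Icc] at *; omega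
      · intro a ha; simp only [Finset.mem_Icc] at *; omega
      · intro a ha; simp only [Finset.mem_Icc] at *; omega
      · intro a ha; rfl
    rw [hsplit]
    have hsum' : ∑ i ∈ Finset.Ico 0 (2 * j0 + 5), uu (2 * j0 + 5) ^ i = 0 := by
      rw [← Finset.range_eq_Ico]; exact hsum
    have s1 : (∑ i ∈ Finset.Ico 0 2, uu (2 * j0 + 5) ^ i) +
        ∑ i ∈ Finset.Ico 2 (2 * j0 + 5), uu (2 * j0 + 5) ^ i =
        ∑ i ∈ Finset.Ico 0 (2 * j0 + 5), uu (2 * j0 + 5) ^ i :=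
      Finset.sum_Ico_consecutive _ (by omega) (by omega)
    have s2 : (∑ i ∈ Finset.Icc 2 (j0 + 1), uu (2 * j0 + 5) ^ i) +
        ∑ i ∈ Finset.Ico (j0 + 2) (2 * j0 + 5), uu (2 * j0 + 5) ^ i =
        ∑ i ∈ Finset.Ico 2 (2 * j0 + 5), uu (2 * j0 + 5) ^ i := by
      rw [show Finset.Icc 2 (j0 + 1) = Finset.Ico 2 (j0 + 2) from rfl]
      exact Finset.sum_Ico_consecutive _ (by omega) (by omega)
    have s3 : (∑ i ∈ Finset.Ico (j0 + 2) (j0 + 4), uu (2 * j0 + 5) ^ i) +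
        ∑ i ∈ Finset.Ico (j0 + 4) (2 * j0 + 5), uu (2 * j0 + 5) ^ i =
        ∑ i ∈ Finset.Ico (j0 + 2) (2 * j0 + 5), uu (2 * j0 + 5) ^ i :=
      Finset.sum_Ico_consecutive _ (by omega) (by omega)
    have s4 : (∑ i ∈ Finset.Icc (j0 + 4) (2 * j0 + 3), uu (2 * j0 + 5) ^ i) +
        ∑ i ∈ Finset.Ico (2 * j0 + 4) (2 * j0 + 5), uu (2 * j0 + 5) ^ i =
        ∑ i ∈ Finset.Ico (j0 + 4) (2 * j0 + 5), uu (2 * j0 + 5) ^ i := by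
      rw [show Finset.Icc (j0 + 4) (2 * j0 + 3) = Finset.Ico (j0 + 4) (2 * j0 + 4) from rfl]
      exact Finset.sum_Ico_consecutive _ (by omega) (by omega)
    have a1 : ∑ i ∈ Finset.Ico 0 2, uu (2 * j0 + 5) ^ i = 1 + uu (2 * j0 + 5) := by
      rw [show Finset.Ico 0 2 = Finset.range 2 from by rw [Finset.range_eq_Ico]]
      simp [Finset.sum_range_succ]
    have a3 : ∑ i ∈ Finset.Ico (j0 + 2) (j0 + 4), uu (2 * j0 + 5) ^ i =
        uu (2 * j0 + 5) ^ (j0 + 2) + uu (2 * j0 + 5) ^ (j0 + 3) := by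
      rw [show j0 + 4 = (j0 + 3) + 1 from rfl, Finset.sum_Ico_succ_top (by omega),
        show j0 + 3 = (j0 + 2) + 1 from rfl, Finset.sum_Ico_succ_top (by omega)]
      simp
    have a5 : ∑ i ∈ Finset.Ico (2 * j0 + 4) (2 * j0 + 5), uu (2 * j0 + 5) ^ i =
        uu (2 * j0 + 5) ^ (2 * j0 + 4) := by
      rw [show 2 * j0 + 5 = (2 * j0 + 4) + 1 from rfl, Finset.sum_Ico_succ_top (by omega)]
      simp
    linear_combination s1 + s2 + s3 + s4 - a1 - a3 - a5 + hsum'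
  rw [hS]
  linear_combination (-(n : cyclicQuot (2 * j0 + 5)) * uu (2 * j0 + 5) -
    (m : cyclicQuot (2 * j0 + 5)) +
    2 * (m : cyclicQuot (2 * j0 + 5)) * uu (2 * j0 + 5) ^ (j0 + 2) -
    (m : cyclicQuot (2 * j0 + 5)) * uu (2 * j0 + 5) ^ 2) * hup
end

section
/- Let ζ be a primitive d-th root of unity with d ≥ 2 dividing p_k, let P be a nonzero integer, and suppose that P·(ζ^a − 1)(ζ^b − 1) = ±ζ^h·(ζ − 1)(ζ^c − 1) for all divisors d ≥ 2 of p_k, where a, b, c are coprime to p_k and h is an integer. If p_k ≥ 2, then |P| = 1. -/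
/-!
Taking absolute values of the torsion equation at a nontrivial `p`-th root of unity `ξ`, which is a
primitive root of order `orderOf ξ ∣ p`, gives `|P| |ξ^a - 1| |ξ^b - 1| = |ξ - 1| |ξ^c - 1|`.
Multiply over all such `ξ`: since `ξ ↦ ξ^k` permutes them for `k` coprime to `p`, every product
`∏ |ξ^k - 1|` equals `E = ∏ |ξ - 1| ≠ 0`, so `|P|^(p-1) E² = E²`.
-/

open Polynomial

section RootsOfUnity

variable {R : Type*} [CommRing R] [IsDomain R] [DecidableEq R] {n k : ℕ}

theorem prod_nthRootsFinset_erase_one_comp_pow {β : Type*} [CommMonoid β] (hk : k.Coprime n)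
    (f : R → β) :
    ∏ ξ ∈ (nthRootsFinset n (1 : R)).erase 1, f (ξ ^ k) =
      ∏ ξ ∈ (nthRootsFinset n (1 : R)).erase 1, f ξ := by
  rcases n.eq_zero_or_pos with rfl | hn
  · simp
  obtain ⟨u, -, hu⟩ := Nat.exists_mul_mod_eq_of_coprime 1 hk hn.ne'
  have pow_mul_inv : ∀ ξ ∈ (nthRootsFinset n (1 : R)).erase 1, ξ ^ (k * u) = ξ := fun ξ hξ => by
    have hξn := (mem_nthRootsFinset hn _).1 (Finset.mem_of_mem_erase hξ)
    rw [pow_eq_pow_mod _ hξn, hu, ← pow_eq_pow_mod _ hξn, pow_one]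
  have pow_mem : ∀ m, m ∣ k * u → ∀ ξ ∈ (nthRootsFinset n (1 : R)).erase 1,
      ξ ^ m ∈ (nthRootsFinset n (1 : R)).erase 1 := by
    rintro m ⟨t, ht⟩ ξ hξ
    refine Finset.mem_erase.2 ⟨fun h1 => Finset.ne_of_mem_erase hξ ?_, ?_⟩
    · rw [← pow_mul_inv ξ hξ, ht, pow_mul, h1, one_pow]
    · rw [mem_nthRootsFinset hn, ← pow_mul, mul_comm, pow_mul,
        (mem_nthRootsFinset hn _).1 (Finset.mem_of_mem_erase hξ), one_pow]
  refine Finset.prod_nbij' (· ^ k) (· ^ u) (pow_mem k (dvd_mul_right k u))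
    (pow_mem u (dvd_mul_left u k)) (fun ξ hξ => ?_) (fun ξ hξ => ?_) fun _ _ => rfl
  · rw [← pow_mul, pow_mul_inv ξ hξ]
  · rw [← pow_mul, mul_comm, pow_mul_inv ξ hξ]

theorem two_le_orderOf_and_dvd_of_mem_nthRootsFinset_erase_one {ξ : R}
    (hξ : ξ ∈ (nthRootsFinset n (1 : R)).erase 1) : 2 ≤ orderOf ξ ∧ orderOf ξ ∣ n := by
  rcases n.eq_zero_or_pos with rfl | hn
  · simp at hξ
  obtain ⟨hξ1, hξn⟩ := Finset.mem_erase.1 hξ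
  have hdvd := orderOf_dvd_of_pow_eq_one ((mem_nthRootsFinset hn _).1 hξn)
  have hpos := Nat.pos_of_dvd_of_pos hdvd hn
  have hne1 : orderOf ξ ≠ 1 := mt orderOf_eq_one_iff.1 hξ1
  exact ⟨by omega, hdvd⟩

end RootsOfUnity

theorem natAbs_mul_norm_mul_norm_eq {ζ : ℂ} (hζ : ‖ζ‖ = 1) {P : ℤ} {a b c h : ℕ} {ε : ℤ}
    (hε : ε = 1 ∨ ε = -1)
    (heq : (P : ℂ) * (ζ ^ a - 1) * (ζ ^ b - 1) = (ε : ℂ) * ζ ^ h * (ζ - 1) * (ζ ^ c - 1)) :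
    (P.natAbs : ℝ) * (‖ζ ^ a - 1‖ * ‖ζ ^ b - 1‖) = ‖ζ - 1‖ * ‖ζ ^ c - 1‖ := by
  have hεnorm : ‖(ε : ℂ)‖ = 1 := by rcases hε with rfl | rfl <;> simp
  simpa [mul_assoc, hεnorm, hζ, Complex.norm_intCast, Nat.cast_natAbs] using congrArg (‖·‖) heq

theorem norm_forces_unit_general (p : ℕ) (hp : 2 ≤ p) (P : ℤ)
    (a b c : ℕ) (ha : Nat.Coprime a p) (hb : Nat.Coprime b p) (hc : Nat.Coprime c p)
    (H : ∀ d : ℕ, 2 ≤ d → d ∣ p → ∀ ζ : ℂ, IsPrimitiveRoot ζ d →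
      ∃ (h : ℕ) (ε : ℤ), (ε = 1 ∨ ε = -1) ∧
        (P : ℂ) * (ζ ^ a - 1) * (ζ ^ b - 1) = (ε : ℂ) * ζ ^ h * (ζ - 1) * (ζ ^ c - 1)) :
    P.natAbs = 1 := by
  set S := (nthRootsFinset p (1 : ℂ)).erase 1
  have hS : ∀ ξ ∈ S, (P.natAbs : ℝ) * (‖ξ ^ a - 1‖ * ‖ξ ^ b - 1‖) = ‖ξ - 1‖ * ‖ξ ^ c - 1‖ := by
    intro ξ hξ
    obtain ⟨hd2, hdp⟩ := two_le_orderOf_and_dvd_of_mem_nthRootsFinset_erase_one hξ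
    obtain ⟨h, ε, hε, heq⟩ := H _ hd2 hdp ξ (IsPrimitiveRoot.orderOf ξ)
    exact natAbs_mul_norm_mul_norm_eq (Complex.norm_eq_one_of_pow_eq_one
      ((mem_nthRootsFinset (by omega) _).1 (Finset.mem_of_mem_erase hξ)) (by omega)) hε heq
  have hcard : S.card = p - 1 := by
    rw [Finset.card_erase_of_mem (one_mem_nthRootsFinset (by omega)),
      (Complex.isPrimitiveRoot_exp p (by omega)).card_nthRootsFinset]
  set E := ∏ ξ ∈ S, ‖ξ - 1‖
  have hE : E ≠ 0 := Finset.prod_ne_zero_iff.2 fun ξ hξ =>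
    norm_ne_zero_iff.2 (sub_ne_zero.2 (Finset.ne_of_mem_erase hξ))
  have hnorm : (P.natAbs : ℝ) ^ (p - 1) * (E * E) = E * E := by
    have hprod := Finset.prod_congr rfl hS
    rwa [Finset.prod_mul_distrib, Finset.prod_mul_distrib, Finset.prod_mul_distrib,
      Finset.prod_const, hcard, prod_nthRootsFinset_erase_one_comp_pow ha (‖· - 1‖),
      prod_nthRootsFinset_erase_one_comp_pow hb (‖· - 1‖),
      prod_nthRootsFinset_erase_one_comp_pow hc (‖· - 1‖)] at hprod
  have hpow := (mul_eq_right₀ (mul_ne_zero hE hE)).1 hnorm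
  exact_mod_cast (pow_eq_one_iff_of_nonneg (Nat.cast_nonneg _) (by omega)).1 hpow

/-- Lemma 4.2(2) of Kadokami (algebraic form): if a nonzero integer `P` satisfies the
torsion equation `P·(ζ^a − 1)(ζ^b − 1) = ±ζ^h·(ζ − 1)(ζ^c − 1)` for every divisor
`d ≥ 2` of `p` and every primitive `d`-th root of unity `ζ`, where `a`, `b`, `c` are
coprime to `p ≥ 2`, then `|P| = 1`. -/
theorem norm_forces_unit (p : ℕ) (hp : 2 ≤ p) (P : ℤ) (hP : P ≠ 0)
    (a b c : ℕ) (ha : Nat.Coprime a p) (hb : Nat.Coprime b p) (hc : Nat.Coprime c p)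
    (H : ∀ d : ℕ, 2 ≤ d → d ∣ p → ∀ ζ : ℂ, IsPrimitiveRoot ζ d →
      ∃ (h : ℕ) (ε : ℤ), (ε = 1 ∨ ε = -1) ∧
        (P : ℂ) * (ζ ^ a - 1) * (ζ ^ b - 1) = (ε : ℂ) * ζ ^ h * (ζ - 1) * (ζ ^ c - 1)) :
    P.natAbs = 1 :=
  norm_forces_unit_general p hp P a b c ha hb hc H
end

section
/- Let k be an integer with |k| ≥ 2 and let g(t) = ((t^k − 1)/(t − 1))² · f(t^k) where f ∈ ℤ[t, t⁻¹] is a Laurent polynomial with f(1) = 1 and f(t) = f(t⁻¹). If deg g ≥ 2, then the trace (sum of roots) of the normalized polynomial associated to g equals −2; in particular g(t) is not of the form t^{n} − t^{n−1} + ⋯ − t^{−n+1} + t^{−n} up to units, and hence does not satisfy the Tange/Hedden–Watson condition for lens space surgeries. -/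
open Polynomial

/-! The sum of the complex roots is additive over products, and for a nonzero polynomial it is
`-nextCoeff / leadingCoeff`. For `∑_{j<N} a^j X^j` with `N ≥ 2` this is `-a⁻¹`, so the squared
geometric sum contributes `2 · (-1) = -2`, while the alternating Tange polynomial has trace `1`.
The expanded polynomial `q(t^k)` only has exponents divisible by `k ≥ 2`, so its subleading
coefficient vanishes and it contributes `0`. -/

namespace Polynomial

theorem nextCoeff_expand {R : Type*} [CommSemiring R] {k : ℕ} (hk : 2 ≤ k) (p : R[X]) :
    (expand R k p).nextCoeff = 0 := by
  rw [nextCoeff, natDegree_expand]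
  split_ifs with hdeg
  · rfl
  rw [coeff_expand (by omega), if_neg]
  intro hdvd
  have hpos : 1 ≤ p.natDegree * k := by omega
  have : k ∣ (p.natDegree * k - 1) + 1 := by
    rw [Nat.sub_add_cancel hpos]
    exact dvd_mul_left k _
  have := Nat.eq_one_of_dvd_one ((Nat.dvd_add_right hdvd).1 this)
  omega

section GeometricSum

variable {R : Type*} [Semiring R] (a : R) (N : ℕ)

theorem coeff_sum_range_C_pow_mul_X_pow (n : ℕ) :
    (∑ j ∈ Finset.range N, C (a ^ j) * X ^ j).coeff n = if n < N then a ^ n else 0 := by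
  simp only [finsetSum_coeff, coeff_C_mul_X_pow, Finset.sum_ite_eq, Finset.mem_range]

variable [NoZeroDivisors R] {a}

theorem natDegree_sum_range_C_pow_mul_X_pow (ha : a ≠ 0) :
    (∑ j ∈ Finset.range N, C (a ^ j) * X ^ j).natDegree = N - 1 := by
  rcases Nat.eq_zero_or_pos N with rfl | hN
  · simp
  refine natDegree_eq_of_le_of_coeff_ne_zero ?_ ?_
  · refine natDegree_le_iff_coeff_eq_zero.2 fun n hn => ?_
    rw [coeff_sum_range_C_pow_mul_X_pow, if_neg (by omega)]
  · rw [coeff_sum_range_C_pow_mul_X_pow, if_pos (by omega)]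
    exact pow_ne_zero _ ha

end GeometricSum

theorem sum_roots_eq_neg_nextCoeff_div_leadingCoeff {K : Type*} [Field K] {p : K[X]}
    (hp : p.Splits) : p.roots.sum = -p.nextCoeff / p.leadingCoeff := by
  rcases eq_or_ne p 0 with rfl | hp0
  · simp
  rw [hp.nextCoeff_eq_neg_sum_roots_mul_leadingCoeff]
  field_simp [leadingCoeff_ne_zero.2 hp0]

variable {K : Type*} [Field K] [IsAlgClosed K]

theorem sum_roots_expand {k : ℕ} (hk : 2 ≤ k) (p : K[X]) : (expand K k p).roots.sum = 0 := by
  simp [sum_roots_eq_neg_nextCoeff_div_leadingCoeff (IsAlgClosed.splits _), nextCoeff_expand hk]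

theorem sum_roots_sum_range_C_pow_mul_X_pow {a : K} (ha : a ≠ 0) {N : ℕ} (hN : 2 ≤ N) :
    (∑ j ∈ Finset.range N, C (a ^ j) * X ^ j).roots.sum = -a⁻¹ := by
  obtain ⟨m, rfl⟩ : ∃ m, N = m + 2 := ⟨N - 2, by omega⟩
  rw [sum_roots_eq_neg_nextCoeff_div_leadingCoeff (IsAlgClosed.splits _), nextCoeff,
    leadingCoeff, natDegree_sum_range_C_pow_mul_X_pow _ ha, if_neg (by omega),
    coeff_sum_range_C_pow_mul_X_pow, coeff_sum_range_C_pow_mul_X_pow, if_pos (by omega),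
    if_pos (by omega), show m + 2 - 1 - 1 = m by omega, show m + 2 - 1 = m + 1 by omega,
    pow_succ]
  field_simp [pow_ne_zero m ha]

end Polynomial

theorem satellite_trace_neg_two_general (k : ℕ) (hk : 2 ≤ k) (q : Polynomial ℤ)
    (hq0 : q.coeff 0 ≠ 0)
    (G : Polynomial ℤ)
    (hG : G = (∑ i ∈ Finset.range k, X ^ i) ^ 2 * Polynomial.expand ℤ k q) :
    (G.map (Int.castRingHom ℂ)).roots.sum = -2 ∧
    ∀ n : ℕ, 1 ≤ n →
      G ≠ (∑ j ∈ Finset.range (2 * n + 1), C ((-1 : ℤ) ^ j) * X ^ j) ∧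
      G ≠ -(∑ j ∈ Finset.range (2 * n + 1), C ((-1 : ℤ) ^ j) * X ^ j) := by
  set S : ℂ[X] := ∑ i ∈ Finset.range k, C (1 ^ i) * X ^ i
  set Q : ℂ[X] := expand ℂ k (q.map (Int.castRingHom ℂ))
  have hGS : G.map (Int.castRingHom ℂ) = S ^ 2 * Q := by
    simp [S, Q, hG, Polynomial.map_sum, map_expand]
  have hS : S ≠ 0 := by
    intro h
    have := congrArg (coeff · 0) h
    simp [S, show 0 < k by omega] at this
  have hQ : Q ≠ 0 :=
    (expand_ne_zero (by omega)).2 fun h => hq0 (by simpa using congrArg (coeff · 0) h)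
  have htrace : (G.map (Int.castRingHom ℂ)).roots.sum = -2 := by
    rw [hGS, roots_mul (mul_ne_zero (pow_ne_zero 2 hS) hQ), roots_pow, Multiset.sum_add,
      Multiset.sum_nsmul, sum_roots_sum_range_C_pow_mul_X_pow one_ne_zero hk, sum_roots_expand hk]
    norm_num
  have htange (n : ℕ) (hn : 1 ≤ n) :
      ((∑ j ∈ Finset.range (2 * n + 1), C ((-1 : ℤ) ^ j) * X ^ j).map
        (Int.castRingHom ℂ)).roots.sum = 1 := by
    simpa [Polynomial.map_sum] using
      sum_roots_sum_range_C_pow_mul_X_pow (neg_ne_zero.2 (one_ne_zero' ℂ)) (N := 2 * n + 1)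
        (by omega)
  refine ⟨htrace, fun n hn => ⟨fun h => ?_, fun h => ?_⟩⟩
  · have := htange n hn
    rw [← h, htrace] at this
    norm_num at this
  · have := htange n hn
    rw [← neg_neg (∑ j ∈ _, _), ← h, Polynomial.map_neg, roots_neg, htrace] at this
    norm_num at this

/-- Corollary 6.14(2) of Kadokami (algebraic core): let `|k| ≥ 2` (represented by
`k : ℕ`, `k ≥ 2`, per the convention of replacing `k` by `|k|`) and let
`g(t) = ((t^k − 1)/(t − 1))²·f(t^k)` where `f ∈ ℤ[t,t⁻¹]` satisfies `f(1) = 1` and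
`f(t) = f(t⁻¹)`.  Here `f` is represented by its normalized polynomial `q` (a unit
multiple `t^N·f(t)`), so `q` has nonzero constant term, palindromic coefficients,
and `q(1) = 1`, and the normalized polynomial of `g` is
`G = (1 + t + ⋯ + t^{k−1})²·q(t^k)`.  If `deg G ≥ 2`, then the trace (sum of the
roots over `ℂ`) of `G` equals `−2`; in particular `G` is not of the Tange /
Hedden–Watson form `±(t^{2n} − t^{2n−1} + ⋯ − t + 1)` required for lens space
surgeries. -/
theorem satellite_trace_neg_two (k : ℕ) (hk : 2 ≤ k) (q : Polynomial ℤ)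
    (hq0 : q.coeff 0 ≠ 0)
    (hsym : ∀ j ≤ q.natDegree, q.coeff j = q.coeff (q.natDegree - j))
    (h1 : q.eval 1 = 1)
    (G : Polynomial ℤ)
    (hG : G = (∑ i ∈ Finset.range k, X ^ i) ^ 2 * Polynomial.expand ℤ k q)
    (hdeg : 2 ≤ G.natDegree) :
    (G.map (Int.castRingHom ℂ)).roots.sum = -2 ∧
    ∀ n : ℕ, 1 ≤ n →
      G ≠ (∑ j ∈ Finset.range (2 * n + 1), C ((-1 : ℤ) ^ j) * X ^ j) ∧
      G ≠ -(∑ j ∈ Finset.range (2 * n + 1), C ((-1 : ℤ) ^ j) * X ^ j) :=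
  satellite_trace_neg_two_general k hk q hq0 G hG
end
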